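/- arXiv:1007.0584 — 3 statements merged into one kernel-verified Lean document; each statement's English description precedes it below -/
import Mathlib

section
/- The system of equations in real unknowns Q₁, Q₂ with Q₂ ≠ 0 given by 1 + Q₁²/(64Q₂²) = Q₁ and 1/4 − Q₁/(32Q₂) = Q₂ has no real solutions. -/
/-!
With `r = Q₁ / (8 Q₂)` the system reads `1 + r² = 8 Q₂ r` and `Q₂ = (1 - r) / 4`.
Eliminating `Q₂` leaves `3 r² - 2 r + 1 = 0`, whose discriminant `4 - 12` is negative.
-/

lemma three_mul_sq_sub_two_mul_add_one_pos (r : ℝ) : 0 < 3 * r ^ 2 - 2 * r + 1 := by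
  nlinarith [sq_nonneg (3 * r - 1)]

theorem product_system_no_solution (Q₁ Q₂ : ℝ) (hQ₂ : Q₂ ≠ 0) :
    ¬ (1 + Q₁ ^ 2 / (64 * Q₂ ^ 2) = Q₁ ∧ 1 / 4 - Q₁ / (32 * Q₂) = Q₂) := by
  rintro ⟨h1, h2⟩
  set r := Q₁ / (8 * Q₂) with hr
  have hQ₁ : Q₁ = 8 * Q₂ * r := by rw [hr]; field_simp
  have h1' : 1 + r ^ 2 = Q₁ := by rw [← h1, hr, div_pow]; ring
  have h2' : Q₂ = (1 - r) / 4 := by rw [← h2, hr]; field_simp; ring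
  have hquad : 3 * r ^ 2 - 2 * r + 1 = 0 := by
    rw [hQ₁, h2'] at h1'
    linarith
  exact (three_mul_sq_sub_two_mul_add_one_pos r).ne' hquad
end

section
/- For Q = 1/4 + √3/6, the function x(t) = (1/(4Q))t² + ((4Q−1)/(4Q))t, which equals x(t) = (3/(3+2√3))t² + (2√3/(2√3+3))t, satisfies x(0) = 0, x(1) = 1, and (∫_0^1 t·x'(t) dt)/(∫_0^1 (x'(t))² dt) = Q. -/
/-!
For `x(t) = a t² + b t` both integrals are polynomials in `a, b`. With `a = 1/(4Q)`, `b = 1 - a`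
the quotient becomes `2Q(12Q + 1)/(48Q² + 1)`, which equals `Q` exactly when
`48Q² - 24Q - 1 = 0`; `Q = 1/4 + √3/6` is the positive root.
-/

open intervalIntegral

lemma deriv_quadratic (a b t : ℝ) :
    deriv (fun t : ℝ => a * t ^ 2 + b * t) t = 2 * a * t + b := by
  have h : HasDerivAt (fun t : ℝ => a * t ^ 2 + b * t) (a * (2 * t) + b * 1) t :=
    ((hasDerivAt_pow 2 t).const_mul a |>.congr_deriv (by simp)).add
      ((hasDerivAt_id t).const_mul b)
  rw [h.deriv]
  ring

lemma integral_zero_one_quadratic (p q r : ℝ) :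
    ∫ t in (0 : ℝ)..1, (p * t ^ 2 + q * t + r) = p / 3 + q / 2 + r := by
  rw [integral_add, integral_add, integral_const_mul, integral_const_mul, integral_pow,
    integral_id, integral_const]
  · norm_num
    ring
  all_goals apply Continuous.intervalIntegrable; fun_prop

lemma integral_mul_deriv_quadratic (a b : ℝ) :
    ∫ t in (0 : ℝ)..1, t * deriv (fun t : ℝ => a * t ^ 2 + b * t) t = 2 * a / 3 + b / 2 := by
  calc ∫ t in (0 : ℝ)..1, t * deriv (fun t : ℝ => a * t ^ 2 + b * t) t
      = ∫ t in (0 : ℝ)..1, (2 * a * t ^ 2 + b * t + 0) := by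
        congr 1 with t
        rw [deriv_quadratic]
        ring
    _ = 2 * a / 3 + b / 2 := by
        rw [integral_zero_one_quadratic]
        ring

lemma integral_deriv_quadratic_sq (a b : ℝ) :
    ∫ t in (0 : ℝ)..1, (deriv (fun t : ℝ => a * t ^ 2 + b * t) t) ^ 2
      = 4 * a ^ 2 / 3 + 2 * a * b + b ^ 2 := by
  calc ∫ t in (0 : ℝ)..1, (deriv (fun t : ℝ => a * t ^ 2 + b * t) t) ^ 2
      = ∫ t in (0 : ℝ)..1, (4 * a ^ 2 * t ^ 2 + 4 * a * b * t + b ^ 2) := by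
        congr 1 with t
        rw [deriv_quadratic]
        ring
    _ = 4 * a ^ 2 / 3 + 2 * a * b + b ^ 2 := by
        rw [integral_zero_one_quadratic]
        ring

lemma quotient_quadratic_eq {Q : ℝ} (hQ : Q ≠ 0) :
    (2 * (1 / (4 * Q)) / 3 + (4 * Q - 1) / (4 * Q) / 2)
      / (4 * (1 / (4 * Q)) ^ 2 / 3 + 2 * (1 / (4 * Q)) * ((4 * Q - 1) / (4 * Q))
        + ((4 * Q - 1) / (4 * Q)) ^ 2) = 2 * Q * (12 * Q + 1) / (48 * Q ^ 2 + 1) := by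
  have hden : 4 * (1 / (4 * Q)) ^ 2 / 3 + 2 * (1 / (4 * Q)) * ((4 * Q - 1) / (4 * Q))
      + ((4 * Q - 1) / (4 * Q)) ^ 2 = (48 * Q ^ 2 + 1) / (48 * Q ^ 2) := by
    field_simp
    ring
  have : 48 * Q ^ 2 + 1 ≠ 0 := by positivity
  rw [hden]
  field_simp
  ring

lemma quotient_quadratic_eq_self {Q : ℝ} (h : 48 * Q ^ 2 - 24 * Q - 1 = 0) :
    2 * Q * (12 * Q + 1) / (48 * Q ^ 2 + 1) = Q := by
  rw [div_eq_iff (by positivity)]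
  linear_combination (-Q) * h

lemma quadratic_root_sqrt_three : 48 * (1 / 4 + √3 / 6) ^ 2 - 24 * (1 / 4 + √3 / 6) - 1 = 0 := by
  linear_combination (4 / 3 : ℝ) * Real.sq_sqrt (show (0 : ℝ) ≤ 3 by norm_num)

theorem quotient_maximizer_verification :
    let Q : ℝ := 1 / 4 + Real.sqrt 3 / 6
    let x : ℝ → ℝ := fun t => (1 / (4 * Q)) * t ^ 2 + ((4 * Q - 1) / (4 * Q)) * t
    (∀ t : ℝ, x t = (3 / (3 + 2 * Real.sqrt 3)) * t ^ 2
        + (2 * Real.sqrt 3 / (2 * Real.sqrt 3 + 3)) * t) ∧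
      x 0 = 0 ∧ x 1 = 1 ∧
      (∫ t in (0:ℝ)..1, t * deriv x t) / (∫ t in (0:ℝ)..1, (deriv x t) ^ 2) = Q := by
  intro Q x
  have hQ : Q ≠ 0 := by positivity
  have hs : 3 + 2 * √3 ≠ 0 := by positivity
  refine ⟨fun t => ?_, by simp [x], ?_, ?_⟩
  · simp only [x, Q]
    congr 2 <;> field_simp <;> ring
  · simp only [x]
    field_simp
    ring
  · rw [integral_mul_deriv_quadratic, integral_deriv_quadratic_sq, quotient_quadratic_eq hQ,
      quotient_quadratic_eq_self quadratic_root_sqrt_three]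
end

section
/- Define, for a real parameter c, the function x_c on {0, 1/2, 1} by x_c(0) = 0, x_c(1/2) = 1/2 − c, x_c(1) = 1, and set L(c) = ( (1/2)·( 0·2(1/2−c) + (1/2)·2(1/2+c) ) ) / ( (1/2)·( 4(1/2−c)² + 4(1/2+c)² ) ), i.e. the quotient (∫_0^1 t·xᐃ Δt)/(∫_0^1 (xᐃ)² Δt) on the time scale {0,1/2,1}. Then with c = 1/(16Q) and Q = 1/8 + √2/8, the self-consistency equation L(c) = Q holds. -/
/-!
Both delta integrals are explicit polynomials in `c`, and the quotient simplifies to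
`(1/4 + c/2) / (1 + 4c²)`. Substituting `c = 1 / (16 Q)`, the equation `L c = Q` becomes
`64 Q² - 16 Q - 1 = 0`, whose positive root is `Q = (1 + √2) / 8`.
-/

lemma timescale_quotient_eq (c : ℝ) :
    ((1/2) * (0 * (2 * (1/2 - c)) + (1/2) * (2 * (1/2 + c)))) /
        ((1/2) * (4 * (1/2 - c) ^ 2 + 4 * (1/2 + c) ^ 2)) =
      (1 / 4 + c / 2) / (1 + 4 * c ^ 2) := by
  congr 1 <;> ring

lemma quotient_eq_self_of_quadratic {Q : ℝ} (hQ : Q ≠ 0) (hroot : 64 * Q ^ 2 - 16 * Q - 1 = 0) :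
    (1 / 4 + 1 / (16 * Q) / 2) / (1 + 4 * (1 / (16 * Q)) ^ 2) = Q := by
  field_simp
  linear_combination (-32) * hroot

lemma one_add_sqrt_two_div_eight_root :
    64 * (1 / 8 + √2 / 8) ^ 2 - 16 * (1 / 8 + √2 / 8) - 1 = 0 := by
  linear_combination Real.sq_sqrt (zero_le_two : (0 : ℝ) ≤ 2)

theorem timescale_quotient_selfconsistency :
    let L : ℝ → ℝ := fun c =>
      ((1/2) * (0 * (2 * (1/2 - c)) + (1/2) * (2 * (1/2 + c)))) /
        ((1/2) * (4 * (1/2 - c) ^ 2 + 4 * (1/2 + c) ^ 2))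
    let Q : ℝ := 1 / 8 + Real.sqrt 2 / 8
    let c : ℝ := 1 / (16 * Q)
    L c = Q := by
  intro L Q c
  have hQ : Q ≠ 0 := by positivity
  simp only [L, c, timescale_quotient_eq]
  exact quotient_eq_self_of_quadratic hQ one_add_sqrt_two_div_eight_root
end
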